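/- For every natural number n, the sum over all tuples (y₁, …, yₙ) of nonnegative integers satisfying Σᵢ₌₁ⁿ i·yᵢ = n of ( (Σᵢ yᵢ)! / (y₁! ⋯ yₙ!) ) · (−1)^{Σᵢ yᵢ} · Πᵢ₌₁ⁿ (1/i!)^{yᵢ}, computed in ℚ, equals (−1)ⁿ / n!. -/

import Mathlib

/-! Grouping the tuples `y` by `k = ∑ yᵢ`, the `k`-th group is the multinomial expansion of the
`n`-th coefficient of `(1 - eˣ)ᵏ`, in which only the terms `-xⁱ⁺¹/(i+1)!` with `i < n` of
`1 - eˣ` can contribute. As `1 - eˣ` has no constant term, summing over `k ≤ n` gives the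
`n`-th coefficient of `1/(1 - (1 - eˣ)) = e⁻ˣ`, which is `(-1)ⁿ/n!`. -/

open Finset PowerSeries

namespace PowerSeries

variable {R : Type*}

theorem coeff_pow_eq_coeff_trunc_pow [CommSemiring R] (φ : R⟦X⟧) (n k : ℕ) :
    coeff n (φ ^ k) = coeff n ((trunc (n + 1) φ : R⟦X⟧) ^ k) := by
  rw [← coeff_coe_trunc_of_lt n.lt_succ_self, ← trunc_trunc_pow,
    coeff_coe_trunc_of_lt n.lt_succ_self]

theorem coeff_sum_C_mul_X_pow_pow [CommSemiring R] {ι : Type*} [DecidableEq ι] (s : Finset ι)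
    (c : ι → R) (d : ι → ℕ) (n k : ℕ) :
    coeff n ((∑ i ∈ s, C (c i) * X ^ d i) ^ k) =
      ∑ y ∈ s.piAntidiag k with ∑ i ∈ s, d i * y i = n,
        (Nat.multinomial s y : R) * ∏ i ∈ s, c i ^ y i := by
  have monomial_prod (y : ι → ℕ) : ∏ i ∈ s, (C (c i) * X ^ d i) ^ y i =
      C (∏ i ∈ s, c i ^ y i) * X ^ (∑ i ∈ s, d i * y i) := by
    simp only [mul_pow, prod_mul_distrib, ← pow_mul, prod_pow_eq_pow_sum, map_prod, map_pow,
      mul_comm (d _)]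
  simp only [sum_pow_eq_sum_piAntidiag, map_sum, sum_filter, monomial_prod,
    ← map_natCast (C (R := R)), ← mul_assoc, ← map_mul, coeff_C_mul_X_pow, eq_comm (a := n)]

theorem sum_coeff_pow_eq_coeff_of_mul_one_sub_eq_one [CommRing R] {φ ψ : R⟦X⟧}
    (hφ : constantCoeff φ = 0) (hψ : ψ * (1 - φ) = 1) (n : ℕ) :
    ∑ k ∈ range (n + 1), coeff n (φ ^ k) = coeff n ψ := by
  have geom : ∑ k ∈ range (n + 1), φ ^ k = ψ - ψ * φ ^ (n + 1) := by
    calc ∑ k ∈ range (n + 1), φ ^ k = ψ * ((1 - φ) * ∑ k ∈ range (n + 1), φ ^ k) := by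
          rw [← mul_assoc, hψ, one_mul]
      _ = ψ - ψ * φ ^ (n + 1) := by rw [mul_neg_geom_sum]; ring
  have tail : coeff n (ψ * φ ^ (n + 1)) = 0 := by
    have : X ^ (n + 1) ∣ ψ * φ ^ (n + 1) :=
      (pow_dvd_pow_of_dvd (X_dvd_iff.mpr hφ) _).mul_left ψ
    exact X_pow_dvd_iff.mp this n n.lt_succ_self
  rw [← map_sum, geom, map_sub, tail, sub_zero]

theorem trunc_exp_sub_one (n : ℕ) :
    (trunc (n + 1) (exp ℚ - 1) : ℚ⟦X⟧) =
      ∑ i : Fin n, C (1 / ((i : ℕ) + 1).factorial : ℚ) * X ^ ((i : ℕ) + 1) := by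
  rw [trunc_apply, Nat.Ico_zero_eq_range, sum_range_succ', Fin.sum_univ_eq_sum_range
    (fun i => C (1 / (i + 1).factorial : ℚ) * X ^ (i + 1)),
    ← Polynomial.coeToPowerSeries.ringHom_apply, map_add, map_sum]
  simp [coeff_exp, monomial_eq_C_mul_X_pow]

theorem coeff_one_sub_exp_pow (n k : ℕ) :
    coeff n ((1 - exp ℚ) ^ k) =
      ∑ y ∈ (univ : Finset (Fin n)).piAntidiag k with ∑ i : Fin n, ((i : ℕ) + 1) * y i = n,
        (Nat.multinomial univ y : ℚ) * (-1) ^ (∑ i, y i) *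
          ∏ i : Fin n, (1 / (((i : ℕ) + 1).factorial : ℚ)) ^ y i := by
  have sign : (1 - exp ℚ) ^ k = C ((-1 : ℚ) ^ k) * (exp ℚ - 1) ^ k := by
    rw [map_pow, map_neg, map_one, ← mul_pow, neg_one_mul, neg_sub]
  rw [sign, coeff_C_mul, coeff_pow_eq_coeff_trunc_pow, trunc_exp_sub_one,
    coeff_sum_C_mul_X_pow_pow, mul_sum]
  refine sum_congr rfl fun y hy => ?_
  rw [(mem_piAntidiag.mp (mem_filter.mp hy).1).1]
  ring

theorem sum_coeff_one_sub_exp_pow (n : ℕ) :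
    ∑ k ∈ range (n + 1), coeff n ((1 - exp ℚ) ^ k) = ((-1) ^ n / n.factorial : ℚ) := by
  have inverse : evalNegHom (exp ℚ) * (1 - (1 - exp ℚ)) = 1 := by
    rw [sub_sub_cancel, mul_comm, exp_mul_exp_neg_eq_one]
  rw [sum_coeff_pow_eq_coeff_of_mul_one_sub_eq_one (by simp) inverse, evalNegHom, coeff_rescale,
    coeff_exp]
  simp [div_eq_mul_inv]

end PowerSeries

theorem sum_le_of_sum_succ_mul_eq {n m : ℕ} {y : Fin n → ℕ}
    (h : ∑ i : Fin n, ((i : ℕ) + 1) * y i = m) : ∑ i, y i ≤ m :=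
  h ▸ sum_le_sum fun i _ => Nat.le_mul_of_pos_left (y i) (Nat.succ_pos i)

theorem filter_sum_eq_filter_piAntidiag (n k : ℕ) :
    {y ∈ {y ∈ Fintype.piFinset fun _ : Fin n => range (n + 1) |
        ∑ i : Fin n, ((i : ℕ) + 1) * y i = n} | ∑ i, y i = k} =
      {y ∈ (univ : Finset (Fin n)).piAntidiag k | ∑ i : Fin n, ((i : ℕ) + 1) * y i = n} := by
  ext y
  simp only [mem_filter, Fintype.mem_piFinset, mem_piAntidiag, mem_range, mem_univ,
    implies_true, and_true]
  constructor
  · rintro ⟨⟨-, weight⟩, size⟩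
    exact ⟨size, weight⟩
  · rintro ⟨size, weight⟩
    refine ⟨⟨fun i => Nat.lt_succ_of_le ?_, weight⟩, size⟩
    calc y i ≤ ∑ j, y j := single_le_sum (fun j _ => Nat.zero_le (y j)) (mem_univ i)
      _ ≤ n := sum_le_of_sum_succ_mul_eq weight

theorem partition_multinomial_inv_factorial_sum (n : ℕ) :
    ∑ y ∈ (Fintype.piFinset fun _ : Fin n => Finset.range (n + 1)).filter
        (fun y => ∑ i : Fin n, ((i : ℕ) + 1) * y i = n),
      (Nat.multinomial Finset.univ y : ℚ) * (-1) ^ (∑ i, y i) *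
        ∏ i : Fin n, (1 / ((((i : ℕ) + 1).factorial : ℚ))) ^ y i =
      (-1) ^ n / (n.factorial : ℚ) := by
  rw [← sum_fiberwise_of_maps_to (t := range (n + 1)) (g := fun y : Fin n → ℕ => ∑ i, y i)
      fun y hy => mem_range_succ_iff.mpr (sum_le_of_sum_succ_mul_eq (mem_filter.mp hy).2),
    ← sum_coeff_one_sub_exp_pow]
  refine sum_congr rfl fun k _ => ?_
  rw [coeff_one_sub_exp_pow, filter_sum_eq_filter_piAntidiag]
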